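/- arXiv:2206.06188 — 2 statements merged into one kernel-verified Lean document; each statement's English description precedes it below -/
import Mathlib

section
/- For every r > 0, the integral over ℝ of t / sinh(2rt) dt equals π²/(8r²). -/
/-!
Expanding `1 / sinh u = 2 e^{-u} / (1 - e^{-2u})` as a geometric series gives
`u / sinh u = 2 ∑ₙ u e^{-(2n+1)u}` for `u > 0`. All terms are nonnegative, so the series may be
integrated termwise, and `∫₀^∞ u e^{-bu} du = 1 / b²` turns the integral into
`2 ∑ₙ 1 / (2n+1)² = 2 (1 - 1/4) ζ(2) = π² / 4`. The integrand of the theorem is even, so the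
substitution `u = 2rt` on the half line finishes the proof.
-/

open Real MeasureTheory Set

theorem hasSum_one_div_odd_sq :
    HasSum (fun n : ℕ => 1 / (2 * n + 1 : ℝ) ^ 2) (π ^ 2 / 8) := by
  have heven : HasSum (fun n : ℕ => 1 / ((2 * n : ℕ) : ℝ) ^ 2) (π ^ 2 / 24) := by
    have h := hasSum_zeta_two.mul_left (1 / 4)
    rw [show 1 / 4 * (π ^ 2 / 6) = π ^ 2 / 24 by ring] at h
    exact h.congr_fun fun n => by push_cast; ring
  obtain ⟨S, hodd⟩ : Summable fun n : ℕ => 1 / ((2 * n + 1 : ℕ) : ℝ) ^ 2 :=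
    hasSum_zeta_two.summable.comp_injective fun a b (h : 2 * a + 1 = 2 * b + 1) => by omega
  have hsplit := HasSum.even_add_odd (f := fun n : ℕ => 1 / (n : ℝ) ^ 2) heven hodd
  have hS : S = π ^ 2 / 8 := by linarith [hsplit.unique hasSum_zeta_two]
  rw [← hS]
  exact hodd.congr_fun fun n => by push_cast; rfl

theorem hasSum_exp_neg_odd_mul {u : ℝ} (hu : 0 < u) :
    HasSum (fun n : ℕ => exp (-((2 * n + 1) * u))) (1 / (2 * sinh u)) := by
  have hq : exp (-(2 * u)) < 1 := exp_lt_one_iff.mpr (by linarith)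
  have h := (hasSum_geometric_of_lt_one (exp_pos _).le hq).mul_left (exp (-u))
  have h1 : 1 < exp u := one_lt_exp_iff.mpr hu
  rw [show exp (-u) * (1 - exp (-(2 * u)))⁻¹ = 1 / (2 * sinh u) by
    rw [sinh_eq, show -(2 * u) = -u + -u by ring, exp_add, exp_neg]
    field_simp] at h
  exact h.congr_fun fun n => by rw [← exp_nat_mul, ← exp_add]; ring_nf

theorem integrableOn_mul_exp_neg_mul_Ioi {b : ℝ} (hb : 0 < b) :
    IntegrableOn (fun u => u * exp (-(b * u))) (Ioi 0) := by
  have h := integrableOn_rpow_mul_exp_neg_mul_rpow (s := 1) (p := 1) (by norm_num) one_pos hb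
  refine h.congr_fun (fun u _ => ?_) measurableSet_Ioi
  simp only [rpow_one, neg_mul]

theorem integral_mul_exp_neg_mul_Ioi {b : ℝ} (hb : 0 < b) :
    ∫ u in Ioi (0 : ℝ), u * exp (-(b * u)) = 1 / b ^ 2 := by
  have h := integral_rpow_mul_exp_neg_mul_Ioi two_pos hb
  norm_num [Gamma_two] at h
  rw [h, one_div]

theorem MeasureTheory.integral_eq_of_hasSum_of_nonneg {α : Type*} [MeasurableSpace α]
    {μ : Measure α} {F : ℕ → α → ℝ} {f : α → ℝ} {S : ℝ} (hF_int : ∀ n, Integrable (F n) μ)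
    (hF_nonneg : ∀ n, 0 ≤ᵐ[μ] F n) (hf : ∀ᵐ a ∂μ, HasSum (F · a) (f a))
    (hS : HasSum (fun n => ∫ a, F n a ∂μ) S) : ∫ a, f a ∂μ = S := by
  have hnorm : ∀ n, ∫ a, ‖F n a‖ ∂μ = ∫ a, F n a ∂μ := fun n =>
    integral_congr_ae <| (hF_nonneg n).mono fun a ha => norm_of_nonneg ha
  have h := hasSum_integral_of_summable_integral_norm hF_int
    (by simpa only [hnorm] using hS.summable)
  rw [hS.unique h]
  exact integral_congr_ae <| hf.mono fun a ha => ha.tsum_eq.symm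

theorem integral_Ioi_div_sinh : ∫ u in Ioi (0 : ℝ), u / sinh u = π ^ 2 / 4 := by
  have hb (n : ℕ) : (0 : ℝ) < 2 * n + 1 := by positivity
  refine integral_eq_of_hasSum_of_nonneg
    (F := fun n u => 2 * (u * exp (-((2 * n + 1) * u))))
    (fun n => (integrableOn_mul_exp_neg_mul_Ioi (hb n)).const_mul 2)
    (fun n => (ae_restrict_mem measurableSet_Ioi).mono fun u (hu : 0 < u) => by positivity)
    ((ae_restrict_mem measurableSet_Ioi).mono fun u (hu : 0 < u) => ?_) ?_
  · have h := (hasSum_exp_neg_odd_mul hu).mul_left (2 * u)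
    rw [show 2 * u * (1 / (2 * sinh u)) = u / sinh u by field_simp] at h
    exact h.congr_fun fun n => by ring
  · have h := hasSum_one_div_odd_sq.mul_left 2
    rw [show 2 * (π ^ 2 / 8) = π ^ 2 / 4 by ring] at h
    refine h.congr_fun fun n => ?_
    rw [integral_const_mul, integral_mul_exp_neg_mul_Ioi (hb n)]

theorem integral_Ioi_div_sinh_mul {c : ℝ} (hc : 0 < c) :
    ∫ x in Ioi (0 : ℝ), x / sinh (c * x) = π ^ 2 / (4 * c ^ 2) := by
  have h := integral_comp_mul_left_Ioi (fun u => u / sinh u) 0 hc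
  rw [mul_zero, integral_Ioi_div_sinh, smul_eq_mul] at h
  calc ∫ x in Ioi (0 : ℝ), x / sinh (c * x)
      = c⁻¹ * ∫ x in Ioi (0 : ℝ), c * x / sinh (c * x) := by
        rw [← integral_const_mul]
        congr 1; ext x; field_simp
    _ = π ^ 2 / (4 * c ^ 2) := by rw [h]; field_simp

theorem abs_div_sinh_mul_abs (c t : ℝ) : |t| / sinh (c * |t|) = t / sinh (c * t) := by
  rcases abs_choice t with h | h <;> simp only [h, mul_neg, sinh_neg, neg_div_neg_eq]

theorem integral_div_sinh (r : ℝ) (hr : 0 < r) :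
    ∫ t : ℝ, (if t = 0 then 1 / (2 * r) else t / Real.sinh (2 * r * t))
      = Real.pi ^ 2 / (8 * r ^ 2) := by
  have h_ae : (fun t : ℝ => if t = 0 then 1 / (2 * r) else t / sinh (2 * r * t))
      =ᵐ[volume] fun t => |t| / sinh (2 * r * |t|) := by
    filter_upwards [compl_mem_ae_iff.mpr (measure_singleton (0 : ℝ))] with t ht
    rw [if_neg (mem_compl_singleton_iff.mp ht), abs_div_sinh_mul_abs]
  rw [integral_congr_ae h_ae, integral_comp_abs (f := fun x => x / sinh (2 * r * x)),
    integral_Ioi_div_sinh_mul (by positivity)]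
  field_simp
  ring
end

section
/- Let K ⊂ ℝⁿ be a convex body with B(a,r) ⊂ K ⊂ B(0,2nr) and K° ⊂ B(0, 2n/r). Define K_ℂ := {z = x + iy ∈ ℂⁿ : ⟨x,t⟩² + ⟨y,t⟩² ≤ 1 for all t ∈ K°}. Then (1/(4√2 n²))(K × K) ⊂ K_ℂ ⊂ K × K, where K × K is identified with the set of z = x + iy with x,y ∈ K. -/
/-!
Both inclusions are read off from the polar `K° = {t | ∀ x ∈ K, ⟪x, t⟫ ≤ 1}`.
For the first, Cauchy–Schwarz bounds `|⟪x, t⟫|` by `2nr · 2n/r = 4n²` for `x ∈ K`, `t ∈ K°`,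
so after scaling by `1 / (4√2 n²)` each of the two squares is at most `1/2`.
For the second, `⟪x, t⟫² ≤ 1` on `K°` gives `⟪x, t⟫ ≤ 1` on `K°`, and the bipolar theorem
puts `x` in `K`: a point outside `K` is strictly separated from it by some `v`, and a suitable
multiple of `v` lies in `K°` but pairs with `x` to more than `1`. When the separating level is
not positive, the whole ray through `v` lies in `K°`, which is impossible as `K°` is bounded.
-/

open Pointwise
open scoped InnerProductSpace

section Polar

variable {E : Type*} [NormedAddCommGroup E] [InnerProductSpace ℝ E]

def innerPolar (K : Set E) : Set E := {t | ∀ x ∈ K, ⟪x, t⟫_ℝ ≤ 1}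

/-- The set `K_ℂ ⊆ E × E`, a point `x + iy` being encoded as the pair `(x, y)`. -/
def complexification (K : Set E) : Set (E × E) :=
  {p | ∀ t ∈ innerPolar K, ⟪p.1, t⟫_ℝ ^ 2 + ⟪p.2, t⟫_ℝ ^ 2 ≤ 1}

lemma zero_mem_innerPolar (K : Set E) : (0 : E) ∈ innerPolar K := fun x _ => by simp

lemma smul_mem_innerPolar_of_inner_nonpos {K : Set E} {v : E} (hv : ∀ x ∈ K, ⟪x, v⟫_ℝ ≤ 0)
    {s : ℝ} (hs : 0 ≤ s) : s • v ∈ innerPolar K := fun x hx => by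
  rw [real_inner_smul_right]
  nlinarith [hv x hx]

lemma eq_zero_of_forall_inner_nonpos_of_isBounded_innerPolar {K : Set E}
    (hK : Bornology.IsBounded (innerPolar K)) {v : E} (hv : ∀ x ∈ K, ⟪x, v⟫_ℝ ≤ 0) : v = 0 := by
  obtain ⟨C, hC⟩ := isBounded_iff_forall_norm_le.mp hK
  have hC0 : 0 ≤ C := by simpa using hC 0 (zero_mem_innerPolar K)
  by_contra hv0
  have hnorm : 0 < ‖v‖ := norm_pos_iff.mpr hv0
  have := hC _ (smul_mem_innerPolar_of_inner_nonpos hv (s := (C + 1) / ‖v‖) (by positivity))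
  rw [norm_smul, Real.norm_of_nonneg (by positivity), div_mul_cancel₀ _ hnorm.ne'] at this
  linarith

lemma mem_of_forall_mem_innerPolar_inner_le_one [CompleteSpace E] {K : Set E}
    (hclosed : IsClosed K) (hconv : Convex ℝ K) (hne : K.Nonempty)
    (hbdd : Bornology.IsBounded (innerPolar K)) {x : E}
    (hx : ∀ t ∈ innerPolar K, ⟪x, t⟫_ℝ ≤ 1) : x ∈ K := by
  by_contra hxK
  obtain ⟨f, u, hfK, hfx⟩ := geometric_hahn_banach_closed_point hconv hclosed hxK
  set v := (InnerProductSpace.toDual ℝ E).symm f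
  have hv (z : E) : ⟪z, v⟫_ℝ = f z := by
    rw [real_inner_comm]; exact InnerProductSpace.toDual_symm_apply
  rcases le_or_gt u 0 with hu | hu
  · obtain ⟨z, hz⟩ := hne
    have hv0 : v = 0 := eq_zero_of_forall_inner_nonpos_of_isBounded_innerPolar hbdd
      fun y hy => (hv y).trans_le ((hfK y hy).le.trans hu)
    have := hfK z hz
    rw [← hv, hv0, inner_zero_right] at this hfx
    linarith
  · have hmem : u⁻¹ • v ∈ innerPolar K := fun z hz => by
      rw [real_inner_smul_right, hv, inv_mul_le_iff₀ hu]
      linarith [hfK z hz]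
    have := hx _ hmem
    rw [real_inner_smul_right, hv, inv_mul_le_iff₀ hu] at this
    linarith

lemma complexification_subset_prod [CompleteSpace E] {K : Set E} (hclosed : IsClosed K)
    (hconv : Convex ℝ K) (hne : K.Nonempty) (hbdd : Bornology.IsBounded (innerPolar K)) :
    complexification K ⊆ K ×ˢ K := by
  have hfst (x y : E) (h : ∀ t ∈ innerPolar K, ⟪x, t⟫_ℝ ^ 2 + ⟪y, t⟫_ℝ ^ 2 ≤ 1) : x ∈ K := by
    refine mem_of_forall_mem_innerPolar_inner_le_one hclosed hconv hne hbdd fun t ht => ?_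
    have : ⟪x, t⟫_ℝ ^ 2 ≤ 1 := by nlinarith [h t ht, sq_nonneg ⟪y, t⟫_ℝ]
    exact (le_abs_self _).trans ((sq_le_one_iff_abs_le_one _).mp this)
  exact fun p hp => ⟨hfst p.1 p.2 hp, hfst p.2 p.1 fun t ht => by linarith [hp t ht]⟩

lemma smul_prod_subset_complexification {K : Set E} {A B : ℝ} (hK : K ⊆ Metric.closedBall 0 A)
    (hP : innerPolar K ⊆ Metric.closedBall 0 B) {c : ℝ} (hc : 2 * (c * (A * B)) ^ 2 ≤ 1) :
    c • (K ×ˢ K) ⊆ complexification K := by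
  rintro _ ⟨⟨x, y⟩, ⟨hx, hy⟩, rfl⟩ t ht
  have hA : 0 ≤ A := (norm_nonneg x).trans (mem_closedBall_zero_iff.mp (hK hx))
  have hsq (z : E) (hz : z ∈ K) : (c * ⟪z, t⟫_ℝ) ^ 2 ≤ (c * (A * B)) ^ 2 := by
    refine sq_le_sq.mpr ?_
    rw [abs_mul, abs_mul]
    refine mul_le_mul_of_nonneg_left ?_ (abs_nonneg c)
    calc |⟪z, t⟫_ℝ| ≤ ‖z‖ * ‖t‖ := abs_real_inner_le_norm z t
      _ ≤ A * B := mul_le_mul (mem_closedBall_zero_iff.mp (hK hz))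
          (mem_closedBall_zero_iff.mp (hP ht)) (norm_nonneg _) hA
      _ ≤ |A * B| := le_abs_self _
  simp only [Prod.smul_fst, Prod.smul_snd, real_inner_smul_left]
  linarith [hsq x hx, hsq y hy]

end Polar

lemma two_mul_sq_scale_le_one (n : ℕ) {r : ℝ} (hr : r ≠ 0) :
    2 * (1 / (4 * √2 * n ^ 2) * (2 * n * r * (2 * n / r))) ^ 2 ≤ 1 := by
  rcases n.eq_zero_or_pos with rfl | hn
  · simp -- the scale `1 / 0` is `0`
  have : 1 / (4 * √2 * n ^ 2) * (2 * n * r * (2 * n / r)) = 1 / √2 := by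
    field_simp
    norm_num
  rw [this, div_pow, Real.sq_sqrt zero_le_two]
  norm_num

theorem KC_between_products_general (n : ℕ) (K : Set (EuclideanSpace ℝ (Fin n)))
    (hKcomp : IsCompact K) (hKconv : Convex ℝ K)
    (a : EuclideanSpace ℝ (Fin n)) (r : ℝ) (hr : 0 < r)
    (h1 : Metric.closedBall a r ⊆ K) (h2 : K ⊆ Metric.closedBall 0 (2 * n * r))
    (h3 : {t : EuclideanSpace ℝ (Fin n) | ∀ x ∈ K, ⟪x, t⟫_ℝ ≤ 1}
      ⊆ Metric.closedBall 0 (2 * n / r)) :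
    (1 / (4 * Real.sqrt 2 * n ^ 2)) • (K ×ˢ K) ⊆
        {p : EuclideanSpace ℝ (Fin n) × EuclideanSpace ℝ (Fin n) |
          ∀ t ∈ {t : EuclideanSpace ℝ (Fin n) | ∀ x ∈ K, ⟪x, t⟫_ℝ ≤ 1},
            ⟪p.1, t⟫_ℝ ^ 2 + ⟪p.2, t⟫_ℝ ^ 2 ≤ 1} ∧
      {p : EuclideanSpace ℝ (Fin n) × EuclideanSpace ℝ (Fin n) |
          ∀ t ∈ {t : EuclideanSpace ℝ (Fin n) | ∀ x ∈ K, ⟪x, t⟫_ℝ ≤ 1},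
            ⟪p.1, t⟫_ℝ ^ 2 + ⟪p.2, t⟫_ℝ ^ 2 ≤ 1} ⊆ K ×ˢ K := by
  exact ⟨smul_prod_subset_complexification h2 h3 (two_mul_sq_scale_le_one n hr.ne'),
    complexification_subset_prod hKcomp.isClosed hKconv ⟨a, h1 (Metric.mem_closedBall_self hr.le)⟩
      (Metric.isBounded_closedBall.subset h3)⟩

theorem KC_between_products (n : ℕ) (K : Set (EuclideanSpace ℝ (Fin n)))
    (hKcomp : IsCompact K) (hKconv : Convex ℝ K) (hKint : (interior K).Nonempty)
    (a : EuclideanSpace ℝ (Fin n)) (r : ℝ) (hr : 0 < r)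
    (h1 : Metric.closedBall a r ⊆ K) (h2 : K ⊆ Metric.closedBall 0 (2 * n * r))
    (h3 : {t : EuclideanSpace ℝ (Fin n) | ∀ x ∈ K, ⟪x, t⟫_ℝ ≤ 1}
      ⊆ Metric.closedBall 0 (2 * n / r)) :
    (1 / (4 * Real.sqrt 2 * n ^ 2)) • (K ×ˢ K) ⊆
        {p : EuclideanSpace ℝ (Fin n) × EuclideanSpace ℝ (Fin n) |
          ∀ t ∈ {t : EuclideanSpace ℝ (Fin n) | ∀ x ∈ K, ⟪x, t⟫_ℝ ≤ 1},
            ⟪p.1, t⟫_ℝ ^ 2 + ⟪p.2, t⟫_ℝ ^ 2 ≤ 1} ∧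
      {p : EuclideanSpace ℝ (Fin n) × EuclideanSpace ℝ (Fin n) |
          ∀ t ∈ {t : EuclideanSpace ℝ (Fin n) | ∀ x ∈ K, ⟪x, t⟫_ℝ ≤ 1},
            ⟪p.1, t⟫_ℝ ^ 2 + ⟪p.2, t⟫_ℝ ^ 2 ≤ 1} ⊆ K ×ˢ K :=
  KC_between_products_general n K hKcomp hKconv a r hr h1 h2 h3
end
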